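/- arXiv:math/0608067 — 2 statements merged into one kernel-verified Lean document; each statement's English description precedes it below -/
import Mathlib

section
/- A complete geodesic of curvature λ in the sub-Riemannian S^3 is a closed curve (periodic) if and only if λ/√(1+λ²) is a rational number. -/
open Real
open scoped RealInnerProductSpace

def qi : Quaternion ℝ := ⟨0, 1, 0, 0⟩

/-!
Multiplying a geodesic on the left by `exp(λ s i)`, which commutes with `i`, turns the geodesic
equation into the harmonic oscillator `u'' = -(1 + λ²) u`. Hence, with `μ = √(1 + λ²)`,
`γ s = exp(-λ s i) (cos(μ s) γ 0 + sin(μ s) / μ · (γ' 0 + λ i γ 0))`, which is `T`-periodic as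
soon as `λ T` and `μ T` lie in `2πℤ`. Conversely, write `ℍ = ℂ ⊕ ℂ j`: by horizontality and unit
speed, the `ℂ`-component of `γ s · (γ' 0)⋆` is `exp(-λ s i) sin(μ s) / μ`. If `γ` is `T`-periodic,
so is this scalar function, which forces `sin(μ T) = sin(λ T) = 0` and thus `λ / μ ∈ ℚ`.
-/

open Quaternion

theorem harmonic_oscillator_eq {E : Type*} [NormedAddCommGroup E] [NormedSpace ℝ E]
    {u v : ℝ → E} {ω : ℝ} (hω : ω ≠ 0)
    (hu : ∀ s, HasDerivAt u (v s) s) (hv : ∀ s, HasDerivAt v (-(ω ^ 2) • u s) s) (s : ℝ) :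
    u s = Real.cos (ω * s) • u 0 + (Real.sin (ω * s) / ω) • v 0 := by
  have hcos (t : ℝ) : HasDerivAt (fun t ↦ Real.cos (ω * t)) (-Real.sin (ω * t) * ω) t := by
    simpa using ((hasDerivAt_id t).const_mul ω).cos
  have hsin (t : ℝ) : HasDerivAt (fun t ↦ Real.sin (ω * t)) (Real.cos (ω * t) * ω) t := by
    simpa using ((hasDerivAt_id t).const_mul ω).sin
  have const_of_deriv_zero (F : ℝ → E) (hF : ∀ t, HasDerivAt F 0 t) : F s = F 0 :=
    is_const_of_deriv_eq_zero (fun t ↦ (hF t).differentiableAt) (fun t ↦ (hF t).deriv) s 0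
  have hC : Real.cos (ω * s) • u s - (Real.sin (ω * s) / ω) • v s = u 0 := by
    have h := const_of_deriv_zero (fun t ↦ Real.cos (ω * t) • u t - (Real.sin (ω * t) / ω) • v t)
      fun t ↦ ((hcos t).smul (hu t)).sub (((hsin t).div_const ω).smul (hv t)) |>.congr_deriv
        (by match_scalars <;> field_simp <;> ring)
    simpa using h
  have hD : (ω * Real.sin (ω * s)) • u s + Real.cos (ω * s) • v s = v 0 := by
    have h := const_of_deriv_zero (fun t ↦ (ω * Real.sin (ω * t)) • u t + Real.cos (ω * t) • v t)
      fun t ↦ (((hsin t).const_mul ω).smul (hu t)).add ((hcos t).smul (hv t)) |>.congr_deriv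
        (by match_scalars <;> ring)
    simpa using h
  rw [← hC, ← hD]
  match_scalars <;> field_simp <;> linarith [Real.sin_sq_add_cos_sq (ω * s)]

theorem qi_eq_coe_I : qi = ((Complex.I : ℂ) : Quaternion ℝ) := by
  ext <;> simp [qi]

theorem qi_mul_qi : qi * qi = -1 := by
  rw [qi_eq_coe_I, ← coeComplex_mul, Complex.I_mul_I]
  ext <;> simp

noncomputable def expI (t : ℝ) : Quaternion ℝ := ((Complex.exp (t * Complex.I) : ℂ) : Quaternion ℝ)

theorem expI_zero : expI 0 = 1 := by simp [expI]

theorem expI_neg_mul_expI (t : ℝ) : expI (-t) * expI t = 1 := by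
  rw [expI, expI, ← coeComplex_mul, ← Complex.exp_add]
  simp

theorem qi_mul_expI (t : ℝ) : qi * expI t = expI t * qi := by
  rw [qi_eq_coe_I, expI, ← coeComplex_mul, ← coeComplex_mul, mul_comm]

theorem expI_add_int_mul_two_pi (t : ℝ) (n : ℤ) : expI (t + n * (2 * π)) = expI t := by
  rw [expI, expI]
  push_cast
  rw [add_mul, Complex.exp_add, mul_assoc, Complex.exp_int_mul_two_pi_mul_I, mul_one]

theorem hasDerivAt_expI_const_mul (lam s : ℝ) :
    HasDerivAt (fun t ↦ expI (lam * t)) (lam • (qi * expI (lam * s))) s := by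
  have hexp : HasDerivAt (fun t : ℝ ↦ Complex.exp ((lam * t : ℝ) * Complex.I))
      (Complex.exp ((lam * s : ℝ) * Complex.I) * (lam * Complex.I)) s := by
    simpa using (((hasDerivAt_id s).const_mul lam).ofReal_comp.mul_const Complex.I).cexp
  refine (ofComplex.toLinearMap.toContinuousLinearMap.hasFDerivAt.comp_hasDerivAt s hexp
    |>.congr_deriv ?_)
  ext <;> simp [expI, qi_eq_coe_I] <;> ring

theorem HasDerivAt.expI_mul {X : ℝ → Quaternion ℝ} {X' : Quaternion ℝ} {s : ℝ} (lam : ℝ)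
    (h : HasDerivAt X X' s) :
    HasDerivAt (fun t ↦ expI (lam * t) * X t) (expI (lam * s) * (lam • (qi * X s) + X')) s := by
  refine ((hasDerivAt_expI_const_mul lam s).mul h).congr_deriv ?_
  rw [smul_mul_assoc, qi_mul_expI, mul_assoc, mul_add, mul_smul_comm]

theorem geodesic_eq {lam : ℝ} {γ γ' γ'' : ℝ → Quaternion ℝ}
    (hd1 : ∀ s, HasDerivAt γ (γ' s) s) (hd2 : ∀ s, HasDerivAt γ' (γ'' s) s)
    (heq : ∀ s, γ'' s + γ s + (2 * lam) • (qi * γ' s) = 0) (s : ℝ) :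
    γ s = expI (-(lam * s)) * (Real.cos (√(1 + lam ^ 2) * s) • γ 0 +
      (Real.sin (√(1 + lam ^ 2) * s) / √(1 + lam ^ 2)) • (lam • (qi * γ 0) + γ' 0)) := by
  have hμ : √(1 + lam ^ 2) ^ 2 = 1 + lam ^ 2 := Real.sq_sqrt (by positivity)
  -- `expI (lam * s) * γ s` solves the harmonic oscillator equation with frequency `√(1 + lam²)`
  have hv (s : ℝ) : HasDerivAt (fun t ↦ expI (lam * t) * (lam • (qi * γ t) + γ' t))
      (-(√(1 + lam ^ 2) ^ 2) • (expI (lam * s) * γ s)) s := by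
    have hV : HasDerivAt (fun t ↦ lam • (qi * γ t) + γ' t) (lam • (qi * γ' s) + γ'' s) s :=
      ((hd1 s).const_mul qi).const_smul lam |>.add (hd2 s)
    refine (hV.expI_mul lam).congr_deriv ?_
    rw [hμ, ← mul_smul_comm (-(1 + lam ^ 2)) (expI (lam * s)) (γ s)]
    congr 1
    rw [mul_add, mul_smul_comm, ← mul_assoc, qi_mul_qi, neg_one_mul]
    linear_combination (norm := module) heq s
  have := harmonic_oscillator_eq (Real.sqrt_pos.2 (by positivity)).ne'
    (fun s ↦ (hd1 s).expI_mul lam) hv s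
  simp only [mul_zero, expI_zero, one_mul] at this
  rw [← this, ← mul_assoc, expI_neg_mul_expI, one_mul]

theorem geodesic_periodic {lam : ℝ} {γ γ' γ'' : ℝ → Quaternion ℝ}
    (hd1 : ∀ s, HasDerivAt γ (γ' s) s) (hd2 : ∀ s, HasDerivAt γ' (γ'' s) s)
    (heq : ∀ s, γ'' s + γ s + (2 * lam) • (qi * γ' s) = 0) {T : ℝ} {m n : ℤ}
    (hlam : lam * T = m * (2 * π)) (hμ : √(1 + lam ^ 2) * T = n * (2 * π)) :
    Function.Periodic γ T := by
  intro s
  have hlam' : -(lam * (s + T)) = -(lam * s) + (-m : ℤ) * (2 * π) := by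
    push_cast
    linear_combination -hlam
  rw [geodesic_eq hd1 hd2 heq, geodesic_eq hd1 hd2 heq s, hlam', mul_add √(1 + lam ^ 2), hμ,
    expI_add_int_mul_two_pi, Real.cos_add_int_mul_two_pi, Real.sin_add_int_mul_two_pi]

/-- The `ℂ`-component for the decomposition `ℍ = ℂ ⊕ ℂ j`. -/
def complexPart : Quaternion ℝ →ₗ[ℝ] ℂ where
  toFun x := ⟨x.re, x.imI⟩
  map_add' x y := by apply Complex.ext <;> simp
  map_smul' c x := by apply Complex.ext <;> simp

theorem complexPart_coe_mul (z : ℂ) (x : Quaternion ℝ) :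
    complexPart (z * x) = z * complexPart x := by
  apply Complex.ext <;> simp [complexPart]

theorem complexPart_mul_star (a b : Quaternion ℝ) :
    complexPart (a * star b) = ⟨⟪b, a⟫, -⟪b, qi * a⟫⟩ := by
  apply Complex.ext <;> simp [complexPart, Quaternion.inner_def, qi_eq_coe_I] <;> ring

theorem complexPart_geodesic_mul_star {lam : ℝ} {γ γ' γ'' : ℝ → Quaternion ℝ}
    (hv : ‖γ' 0‖ = 1) (htan : ⟪γ' 0, γ 0⟫ = 0) (hhor : ⟪γ' 0, qi * γ 0⟫ = 0)
    (hd1 : ∀ s, HasDerivAt γ (γ' s) s) (hd2 : ∀ s, HasDerivAt γ' (γ'' s) s)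
    (heq : ∀ s, γ'' s + γ s + (2 * lam) • (qi * γ' s) = 0) (s : ℝ) :
    complexPart (γ s * star (γ' 0)) = Complex.exp ((-lam * s : ℝ) * Complex.I) *
      (Real.sin (√(1 + lam ^ 2) * s) / √(1 + lam ^ 2) : ℝ) := by
  have h₀ : complexPart (γ 0 * star (γ' 0)) = 0 := by
    rw [complexPart_mul_star, htan, hhor, neg_zero]
    rfl
  have h₁ : complexPart (γ' 0 * star (γ' 0)) = 1 := by
    rw [self_mul_star, normSq_eq_norm_mul_self, hv, mul_one]
    rfl
  rw [geodesic_eq hd1 hd2 heq s, mul_assoc, expI, complexPart_coe_mul, neg_mul]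
  simp only [add_mul, smul_mul_assoc, mul_assoc, map_add, map_smul, qi_eq_coe_I,
    complexPart_coe_mul, h₀, h₁]
  simp

theorem sin_mul_eq_zero_of_periodic {a b T : ℝ} (hb : b ≠ 0)
    (h : Function.Periodic
      (fun s : ℝ ↦ Complex.exp ((a * s : ℝ) * Complex.I) * (Real.sin (b * s) / b : ℝ)) T) :
    Real.sin (a * T) = 0 ∧ Real.sin (b * T) = 0 := by
  have hbT : Real.sin (b * T) = 0 := by
    have h₀ := h 0
    simp [Complex.exp_ne_zero, hb] at h₀
    exact_mod_cast h₀
  refine ⟨?_, hbT⟩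
  -- at `s₀ = π / (2b)` periodicity reads `exp(i a T) cos(b T) = 1`, where `cos(b T) = ±1`
  have hs₀ : b * (π / 2 / b) = π / 2 := by field_simp
  have h₁ := h (π / 2 / b)
  beta_reduce at h₁
  rw [mul_add b, hs₀, add_comm (π / 2), Real.sin_add_pi_div_two, Real.sin_pi_div_two, mul_add a,
    Complex.ofReal_add, add_mul, Complex.exp_add, mul_assoc] at h₁
  have h₂ := congrArg Complex.im (mul_left_cancel₀ (Complex.exp_ne_zero _) h₁)
  simp only [Complex.im_mul_ofReal, Complex.exp_ofReal_mul_I_im, Complex.ofReal_im] at h₂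
  have hcos : Real.cos (b * T) ≠ 0 := by
    intro hc
    simpa [hbT, hc] using Real.sin_sq_add_cos_sq (b * T)
  simpa [hb, hcos] using h₂

theorem exists_rat_div_eq_of_sin_eq_zero {a b T : ℝ} (hbT : b * T ≠ 0)
    (ha : Real.sin (a * T) = 0) (hb : Real.sin (b * T) = 0) : ∃ r : ℚ, a / b = r := by
  obtain ⟨m, hm⟩ := Real.sin_eq_zero_iff.1 ha
  obtain ⟨n, hn⟩ := Real.sin_eq_zero_iff.1 hb
  have hn₀ : (n : ℝ) ≠ 0 := by
    rintro h
    rw [h, zero_mul] at hn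
    exact hbT hn.symm
  refine ⟨m / n, ?_⟩
  push_cast
  rw [div_eq_div_iff (left_ne_zero_of_mul hbT) hn₀]
  apply mul_right_cancel₀ (mul_ne_zero (right_ne_zero_of_mul hbT) Real.pi_ne_zero)
  linear_combination (m * π) * hn - (n * π) * hm

theorem geodesic_closed_iff_rational_general (lam : ℝ) (γ γ' γ'' : ℝ → Quaternion ℝ)
    (hv : ‖γ' 0‖ = 1)
    (htan : ⟪γ' 0, γ 0⟫ = 0) (hhor : ⟪γ' 0, qi * γ 0⟫ = 0)
    (hd1 : ∀ s, HasDerivAt γ (γ' s) s) (hd2 : ∀ s, HasDerivAt γ' (γ'' s) s)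
    (heq : ∀ s, γ'' s + γ s + (2 * lam) • (qi * γ' s) = 0) :
    (∃ T : ℝ, 0 < T ∧ ∀ s, γ (s + T) = γ s) ↔
      ∃ r : ℚ, lam / Real.sqrt (1 + lam ^ 2) = (r : ℝ) := by
  have hμ : 0 < √(1 + lam ^ 2) := Real.sqrt_pos.2 (by positivity)
  constructor
  · rintro ⟨T, hT, hper⟩
    have hproj := complexPart_geodesic_mul_star hv htan hhor hd1 hd2 heq
    obtain ⟨hlam, hμT⟩ := sin_mul_eq_zero_of_periodic (a := -lam) (T := T) hμ.ne' fun s ↦ by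
      beta_reduce
      rw [← hproj, ← hproj, hper]
    obtain ⟨r, hr⟩ := exists_rat_div_eq_of_sin_eq_zero (mul_pos hμ hT).ne' hlam hμT
    exact ⟨-r, by rw [Rat.cast_neg, ← hr, neg_div, neg_neg]⟩
  · rintro ⟨r, hr⟩
    have hlam : lam = r * √(1 + lam ^ 2) := (div_eq_iff hμ.ne').1 hr
    have hnum : (r : ℝ) * r.den = r.num := by exact_mod_cast r.mul_den_eq_num
    refine ⟨2 * π * r.den / √(1 + lam ^ 2), by positivity,
      geodesic_periodic hd1 hd2 heq (m := r.num) (n := r.den) ?_ (by field_simp; push_cast; ring)⟩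
    field_simp
    linear_combination (r.den : ℝ) * hlam + √(1 + lam ^ 2) * hnum

/-- A complete geodesic of curvature `λ` in the sub-Riemannian `S³` — i.e. a
horizontal arc-length solution of `γ'' + γ + 2λ(i·γ') = 0` — is a closed
(periodic) curve if and only if `λ/√(1+λ²)` is a rational number. -/
theorem geodesic_closed_iff_rational (lam : ℝ) (γ γ' γ'' : ℝ → Quaternion ℝ)
    (hp : ‖γ 0‖ = 1) (hv : ‖γ' 0‖ = 1)
    (htan : ⟪γ' 0, γ 0⟫ = 0) (hhor : ⟪γ' 0, qi * γ 0⟫ = 0)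
    (hd1 : ∀ s, HasDerivAt γ (γ' s) s) (hd2 : ∀ s, HasDerivAt γ' (γ'' s) s)
    (heq : ∀ s, γ'' s + γ s + (2 * lam) • (qi * γ' s) = 0) :
    (∃ T : ℝ, 0 < T ∧ ∀ s, γ (s + T) = γ s) ↔
      ∃ r : ℚ, lam / Real.sqrt (1 + lam ^ 2) = (r : ℝ) :=
  geodesic_closed_iff_rational_general lam γ γ' γ'' hv htan hhor hd1 hd2 heq
end

section
/- The map F(θ,s)=γ_θ(s) (geodesics of curvature λ from p=(1,0,0,0)) restricted to θ∈[0,2π), s∈(0,π/√(1+λ²)) is injective: if γ_{θ1}(s1)=γ_{θ2}(s2) with s1,s2 in the open interval, then s1=s2 and θ1=θ2. -/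
open Real
open scoped RealInnerProductSpace

/-!
For `λ`-geodesics `γ'' + γ + 2λ i γ' = 0`, left multiplication by `i` is skew, so for the difference
`δ` of two solutions `‖δ‖² + ‖δ'‖²` is conserved: solutions are determined by `γ(0), γ'(0)`.
Writing `μ = √(1 + λ²)`, the solution with `γ(0) = 1`, `γ'(0) = cos θ j + sin θ k` is
`γ_θ(s) = (cos λs - sin λs i) (cos μs + (sin μs / μ) (λ i + cos θ j + sin θ k))`.
Its `i`-component `y₁` has derivative `sin λs sin μs / μ`, so `λ y₁` is strictly increasing on
`(0, π / μ)` when `λ ≠ 0`, while for `λ = 0` the real part is `cos s`; either way `s` is recovered.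
Then `(x₂, y₂) = (sin μs / μ) (cos (θ - λs), sin (θ - λs))` with `sin μs / μ > 0` recovers `θ`
modulo `2π`.
-/

open Quaternion Set

@[simp] theorem qi_re : qi.re = 0 := rfl
@[simp] theorem qi_imI : qi.imI = 1 := rfl
@[simp] theorem qi_imJ : qi.imJ = 0 := rfl
@[simp] theorem qi_imK : qi.imK = 0 := rfl

section HarmonicMotion

variable {V : Type*} [NormedAddCommGroup V] [NormedSpace ℝ V]

noncomputable def harmonicMotion (ω : ℝ) (a b : V) (s : ℝ) : V := cos (ω * s) • a + sin (ω * s) • b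

theorem hasDerivAt_harmonicMotion (ω : ℝ) (a b : V) (s : ℝ) :
    HasDerivAt (harmonicMotion ω a b) (harmonicMotion ω (ω • b) (-(ω • a)) s) s := by
  have hω : HasDerivAt (ω * ·) ω s := by simpa using (hasDerivAt_id s).const_mul ω
  refine ((hω.cos.smul_const a).add (hω.sin.smul_const b)).congr_deriv ?_
  simp only [harmonicMotion, smul_neg, smul_smul]
  module

theorem hasDerivAt_harmonicMotion_deriv (ω : ℝ) (a b : V) (s : ℝ) :
    HasDerivAt (harmonicMotion ω (ω • b) (-(ω • a))) (-ω ^ 2 • harmonicMotion ω a b s) s := by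
  refine (hasDerivAt_harmonicMotion ω _ _ s).congr_deriv ?_
  simp only [harmonicMotion, smul_neg, smul_smul]
  module

end HarmonicMotion

theorem ode_solution_unique_of_skew {E : Type*} [NormedAddCommGroup E] [InnerProductSpace ℝ E]
    (J : E →ₗ[ℝ] E) (hJ : ∀ x, ⟪x, J x⟫ = 0)
    {f f' f'' g g' g'' : ℝ → E}
    (hf : ∀ s, HasDerivAt f (f' s) s) (hf' : ∀ s, HasDerivAt f' (f'' s) s)
    (hg : ∀ s, HasDerivAt g (g' s) s) (hg' : ∀ s, HasDerivAt g' (g'' s) s)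
    (hf_ode : ∀ s, f'' s + f s + J (f' s) = 0) (hg_ode : ∀ s, g'' s + g s + J (g' s) = 0)
    (h₀ : f 0 = g 0) (h₀' : f' 0 = g' 0) : f = g := by
  have hsolve {h h' h'' : ℝ → E} (hode : ∀ s, h'' s + h s + J (h' s) = 0) (s : ℝ) :
      h'' s = -(h s + J (h' s)) :=
    eq_neg_of_add_eq_zero_left (by rw [← add_assoc]; exact hode s)
  have henergy (s : ℝ) :
      HasDerivAt (fun s => ‖f s - g s‖ ^ 2 + ‖f' s - g' s‖ ^ 2) 0 s := by
    refine (((hf s).sub (hg s)).norm_sq.add ((hf' s).sub (hg' s)).norm_sq).congr_deriv ?_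
    have : f'' s - g'' s = -(f s - g s) - J (f' s - g' s) := by
      rw [hsolve hf_ode, hsolve hg_ode, map_sub]; abel
    simp only [Pi.sub_apply, this, inner_sub_left, inner_sub_right, inner_neg_right, hJ]
    rw [real_inner_comm (f s) (f' s), real_inner_comm (f s) (g' s),
      real_inner_comm (g s) (f' s), real_inner_comm (g s) (g' s)]
    ring
  funext s
  have hconst := is_const_of_deriv_eq_zero (fun s => (henergy s).differentiableAt)
    (fun s => (henergy s).deriv) s 0
  simp only [h₀, h₀', sub_self, norm_zero] at hconst
  have : ‖f s - g s‖ ^ 2 = 0 := by nlinarith [sq_nonneg ‖f' s - g' s‖, sq_nonneg ‖f s - g s‖]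
  simpa [sub_eq_zero] using this

def IsGeodesicOfCurvature (lam : ℝ) (γ : ℝ → ℍ) (v : ℍ) : Prop :=
  ∃ γ' γ'' : ℝ → ℍ, (∀ s, HasDerivAt γ (γ' s) s) ∧ (∀ s, HasDerivAt γ' (γ'' s) s) ∧
    (∀ s, γ'' s + γ s + (2 * lam) • (qi * γ' s) = 0) ∧ γ 0 = 1 ∧ γ' 0 = v

noncomputable def initialVelocity (θ : ℝ) : ℍ := ⟨0, 0, cos θ, sin θ⟩

@[simp] theorem initialVelocity_re (θ : ℝ) : (initialVelocity θ).re = 0 := rfl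
@[simp] theorem initialVelocity_imI (θ : ℝ) : (initialVelocity θ).imI = 0 := rfl
@[simp] theorem initialVelocity_imJ (θ : ℝ) : (initialVelocity θ).imJ = cos θ := rfl
@[simp] theorem initialVelocity_imK (θ : ℝ) : (initialVelocity θ).imK = sin θ := rfl

noncomputable def geodesic (lam θ : ℝ) : ℝ → ℍ :=
  harmonicMotion lam 1 (-qi) *
    harmonicMotion √(1 + lam ^ 2) 1 ((√(1 + lam ^ 2))⁻¹ • (lam • qi + initialVelocity θ))

theorem isGeodesicOfCurvature_geodesic (lam θ : ℝ) :
    IsGeodesicOfCurvature lam (geodesic lam θ) (initialVelocity θ) := by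
  set μ := √(1 + lam ^ 2)
  have hμ : μ ^ 2 = 1 + lam ^ 2 := sq_sqrt (by positivity)
  have hμ0 : μ ≠ 0 := by positivity
  set b : ℍ := μ⁻¹ • (lam • qi + initialVelocity θ)
  set E := harmonicMotion lam 1 (-qi)
  set E' := harmonicMotion lam (lam • -qi) (-(lam • 1))
  set Q := harmonicMotion μ 1 b
  set Q' := harmonicMotion μ (μ • b) (-(μ • 1))
  have hE' (s : ℝ) : E' s = -lam • (qi * E s) := by
    ext <;> simp [E, E', harmonicMotion] <;> ring
  refine ⟨E' * Q + E * Q',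
    fun s => (-lam ^ 2 • E s * Q s + E' s * Q' s) + (E' s * Q' s + E s * (-μ ^ 2 • Q s)),
    fun s => (hasDerivAt_harmonicMotion lam 1 (-qi) s).mul (hasDerivAt_harmonicMotion μ 1 b s),
    fun s => ((hasDerivAt_harmonicMotion_deriv lam 1 (-qi) s).mul
      (hasDerivAt_harmonicMotion μ 1 b s)).add ((hasDerivAt_harmonicMotion lam 1 (-qi) s).mul
      (hasDerivAt_harmonicMotion_deriv μ 1 b s)), fun s => ?_, ?_, ?_⟩
  · change _ + E s * Q s + _ = 0
    have key : (-lam ^ 2 • E s * Q s + E' s * Q' s) + (E' s * Q' s + E s * (-μ ^ 2 • Q s)) +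
        (E s * Q s) + (2 * lam) • (qi * (E' s * Q s + E s * Q' s)) =
        (1 + lam ^ 2 - μ ^ 2) • (E s * Q s) := by
      rw [hE']
      ext <;> simp <;> ring
    simpa [hμ] using key
  · simp [geodesic, harmonicMotion]
  · simp [E', Q', E, Q, b, harmonicMotion, smul_smul, hμ0]

theorem inner_self_qi_mul (x : ℍ) : ⟪x, qi * x⟫ = 0 := by
  simp [Quaternion.inner_def]
  ring

theorem IsGeodesicOfCurvature.unique {lam : ℝ} {γ η : ℝ → ℍ} {v : ℍ}
    (hγ : IsGeodesicOfCurvature lam γ v) (hη : IsGeodesicOfCurvature lam η v) : γ = η := by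
  obtain ⟨γ', γ'', hγ₁, hγ₂, hγ_ode, hγ₀, hγ₀'⟩ := hγ
  obtain ⟨η', η'', hη₁, hη₂, hη_ode, hη₀, hη₀'⟩ := hη
  refine ode_solution_unique_of_skew ((2 * lam) • LinearMap.mulLeft ℝ qi) (fun x => ?_)
    hγ₁ hγ₂ hη₁ hη₂ (by simpa using hγ_ode) (by simpa using hη_ode) (hγ₀.trans hη₀.symm)
    (hγ₀'.trans hη₀'.symm)
  simp [inner_smul_right, inner_self_qi_mul]

section Components

variable (lam θ s : ℝ)

theorem geodesic_re : (geodesic lam θ s).re = cos (lam * s) * cos (√(1 + lam ^ 2) * s) +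
    lam / √(1 + lam ^ 2) * sin (lam * s) * sin (√(1 + lam ^ 2) * s) := by
  simp [geodesic, harmonicMotion]
  ring

theorem geodesic_imI : (geodesic lam θ s).imI =
    lam / √(1 + lam ^ 2) * cos (lam * s) * sin (√(1 + lam ^ 2) * s) -
      sin (lam * s) * cos (√(1 + lam ^ 2) * s) := by
  simp [geodesic, harmonicMotion]
  ring

theorem geodesic_imJ : (geodesic lam θ s).imJ =
    sin (√(1 + lam ^ 2) * s) / √(1 + lam ^ 2) * cos (θ - lam * s) := by
  simp [geodesic, harmonicMotion, cos_sub]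
  ring

theorem geodesic_imK : (geodesic lam θ s).imK =
    sin (√(1 + lam ^ 2) * s) / √(1 + lam ^ 2) * sin (θ - lam * s) := by
  simp [geodesic, harmonicMotion, sin_sub]
  ring

end Components

theorem hasDerivAt_geodesic_imI (lam θ s : ℝ) :
    HasDerivAt (fun s => (geodesic lam θ s).imI)
      (sin (lam * s) * sin (√(1 + lam ^ 2) * s) / √(1 + lam ^ 2)) s := by
  set μ := √(1 + lam ^ 2)
  have hμ : μ ^ 2 = 1 + lam ^ 2 := sq_sqrt (by positivity)
  have hμ0 : μ ≠ 0 := by positivity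
  have hl : HasDerivAt (lam * ·) lam s := by simpa using (hasDerivAt_id s).const_mul lam
  have hm : HasDerivAt (μ * ·) μ s := by simpa using (hasDerivAt_id s).const_mul μ
  rw [show (fun s => (geodesic lam θ s).imI) = _ from funext (geodesic_imI lam θ)]
  refine (((hl.cos.const_mul (lam / μ)).mul hm.sin).sub (hl.sin.mul hm.cos)).congr_deriv ?_
  field_simp
  linear_combination sin (lam * s) * sin (μ * s) * hμ

theorem mul_sin_pos_of_abs_lt_pi {x : ℝ} (hx₀ : x ≠ 0) (hx : |x| < π) : 0 < x * sin x := by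
  rcases hx₀.lt_or_gt with hneg | hpos
  · rw [abs_of_neg hneg] at hx
    exact mul_pos_of_neg_of_neg hneg (sin_neg_of_neg_of_neg_pi_lt hneg (by linarith))
  · rw [abs_of_pos hpos] at hx
    exact mul_pos hpos (sin_pos_of_pos_of_lt_pi hpos hx)

theorem strictMonoOn_mul_geodesic_imI {lam : ℝ} (hlam : lam ≠ 0) (θ : ℝ) :
    StrictMonoOn (fun s => lam * (geodesic lam θ s).imI) (Icc 0 (π / √(1 + lam ^ 2))) := by
  set μ := √(1 + lam ^ 2)
  have hμ : 0 < μ := by positivity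
  have hlam_lt : |lam| < μ := by
    rw [← sqrt_sq_eq_abs]
    exact sqrt_lt_sqrt (sq_nonneg lam) (by linarith)
  have hderiv (s : ℝ) := (hasDerivAt_geodesic_imI lam θ s).const_mul lam
  refine strictMonoOn_of_deriv_pos (convex_Icc _ _)
    (HasDerivAt.continuousOn fun s _ => hderiv s) fun s hs => ?_
  rw [interior_Icc] at hs
  have hμs : μ * s < π := (lt_div_iff₀' hμ).mp hs.2
  have hlam_s : |lam * s| < π := by
    rw [abs_mul, abs_of_pos hs.1]
    nlinarith [hs.1]
  have hlam_sin : 0 < lam * sin (lam * s) := by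
    have := mul_sin_pos_of_abs_lt_pi (mul_ne_zero hlam hs.1.ne') hlam_s
    rw [mul_right_comm] at this
    exact (pos_iff_pos_of_mul_pos this).mpr hs.1
  rw [(hderiv s).deriv, ← mul_div_assoc, ← mul_assoc]
  exact div_pos (mul_pos hlam_sin (sin_pos_of_pos_of_lt_pi (mul_pos hμ hs.1) hμs)) hμ

theorem time_eq_of_geodesic_eq {lam θ₁ θ₂ s₁ s₂ : ℝ} (hs₁ : s₁ ∈ Ioo 0 (π / √(1 + lam ^ 2)))
    (hs₂ : s₂ ∈ Ioo 0 (π / √(1 + lam ^ 2))) (h : geodesic lam θ₁ s₁ = geodesic lam θ₂ s₂) :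
    s₁ = s₂ := by
  rcases eq_or_ne lam 0 with rfl | hlam
  · have hcos := congrArg (·.re) h
    simp only [geodesic_re, zero_mul, cos_zero, sin_zero, one_mul, mul_zero, add_zero, ne_eq,
      OfNat.ofNat_ne_zero, not_false_eq_true, zero_pow, sqrt_one, div_one] at hcos hs₁ hs₂
    exact injOn_cos (Ioo_subset_Icc_self hs₁) (Ioo_subset_Icc_self hs₂) hcos
  · have himI : (geodesic lam θ₁ s₂).imI = (geodesic lam θ₂ s₂).imI := by
      rw [geodesic_imI, geodesic_imI]
    exact (strictMonoOn_mul_geodesic_imI hlam θ₁).injOn (Ioo_subset_Icc_self hs₁)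
      (Ioo_subset_Icc_self hs₂) (congrArg (lam * ·) ((congrArg (·.imI) h).trans himI.symm))

theorem eq_of_cos_sub_eq_of_sin_sub_eq {θ₁ θ₂ φ : ℝ} (hθ₁ : θ₁ ∈ Ico 0 (2 * π))
    (hθ₂ : θ₂ ∈ Ico 0 (2 * π)) (hcos : cos (θ₁ - φ) = cos (θ₂ - φ))
    (hsin : sin (θ₁ - φ) = sin (θ₂ - φ)) : θ₁ = θ₂ := by
  have h : cos (θ₁ - θ₂) = 1 := by
    rw [show θ₁ - θ₂ = (θ₁ - φ) - (θ₂ - φ) by ring, cos_sub, hcos, hsin, ← sq, ← sq,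
      cos_sq_add_sin_sq]
  have := (cos_eq_one_iff_of_lt_of_lt (by linarith [hθ₁.1, hθ₂.2])
    (by linarith [hθ₁.2, hθ₂.1])).mp h
  linarith

theorem angle_eq_of_geodesic_eq {lam θ₁ θ₂ s : ℝ} (hθ₁ : θ₁ ∈ Ico 0 (2 * π))
    (hθ₂ : θ₂ ∈ Ico 0 (2 * π)) (hs : s ∈ Ioo 0 (π / √(1 + lam ^ 2)))
    (h : geodesic lam θ₁ s = geodesic lam θ₂ s) : θ₁ = θ₂ := by
  set μ := √(1 + lam ^ 2)
  have hμ : 0 < μ := by positivity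
  have hr : sin (μ * s) / μ ≠ 0 :=
    (div_pos (sin_pos_of_pos_of_lt_pi (mul_pos hμ hs.1) ((lt_div_iff₀' hμ).mp hs.2)) hμ).ne'
  have hJ := congrArg (·.imJ) h
  have hK := congrArg (·.imK) h
  rw [geodesic_imJ, geodesic_imJ] at hJ
  rw [geodesic_imK, geodesic_imK] at hK
  exact eq_of_cos_sub_eq_of_sin_sub_eq hθ₁ hθ₂ (mul_left_cancel₀ hr hJ) (mul_left_cancel₀ hr hK)

/-- The map `F(θ,s) = γ_θ(s)`, where `γ_θ` is the geodesic of curvature `λ` from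
`p = (1,0,0,0)` with initial velocity `(0,0,cos θ,sin θ)`, is injective on
`θ ∈ [0,2π)`, `s ∈ (0, π/√(1+λ²))`: if `γ_{θ₁}(s₁) = γ_{θ₂}(s₂)` then `s₁ = s₂`
and `θ₁ = θ₂`. -/
theorem geodesic_map_injective (lam θ₁ θ₂ s₁ s₂ : ℝ)
    (hθ₁ : θ₁ ∈ Set.Ico (0:ℝ) (2 * π)) (hθ₂ : θ₂ ∈ Set.Ico (0:ℝ) (2 * π))
    (hs₁ : s₁ ∈ Set.Ioo 0 (π / Real.sqrt (1 + lam ^ 2)))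
    (hs₂ : s₂ ∈ Set.Ioo 0 (π / Real.sqrt (1 + lam ^ 2)))
    (γ₁ γ₁' γ₁'' γ₂ γ₂' γ₂'' : ℝ → Quaternion ℝ)
    (hγ₁0 : γ₁ 0 = 1) (hγ₁'0 : γ₁' 0 = ⟨0, 0, Real.cos θ₁, Real.sin θ₁⟩)
    (hγ₂0 : γ₂ 0 = 1) (hγ₂'0 : γ₂' 0 = ⟨0, 0, Real.cos θ₂, Real.sin θ₂⟩)
    (hd11 : ∀ s, HasDerivAt γ₁ (γ₁' s) s) (hd12 : ∀ s, HasDerivAt γ₁' (γ₁'' s) s)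
    (hd21 : ∀ s, HasDerivAt γ₂ (γ₂' s) s) (hd22 : ∀ s, HasDerivAt γ₂' (γ₂'' s) s)
    (heq1 : ∀ s, γ₁'' s + γ₁ s + (2 * lam) • (qi * γ₁' s) = 0)
    (heq2 : ∀ s, γ₂'' s + γ₂ s + (2 * lam) • (qi * γ₂' s) = 0)
    (hmeet : γ₁ s₁ = γ₂ s₂) :
    s₁ = s₂ ∧ θ₁ = θ₂ := by
  have h₁ : γ₁ = geodesic lam θ₁ :=
    IsGeodesicOfCurvature.unique ⟨γ₁', γ₁'', hd11, hd12, heq1, hγ₁0, hγ₁'0⟩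
      (isGeodesicOfCurvature_geodesic lam θ₁)
  have h₂ : γ₂ = geodesic lam θ₂ :=
    IsGeodesicOfCurvature.unique ⟨γ₂', γ₂'', hd21, hd22, heq2, hγ₂0, hγ₂'0⟩
      (isGeodesicOfCurvature_geodesic lam θ₂)
  rw [h₁, h₂] at hmeet
  obtain rfl := time_eq_of_geodesic_eq hs₁ hs₂ hmeet
  exact ⟨rfl, angle_eq_of_geodesic_eq hθ₁ hθ₂ hs₁ hmeet⟩
end
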